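/- Let $p$ be a prime and $m < n$ positive integers. Then every element of the group $\{\begin{pmatrix} a & b \\ c & d\end{pmatrix} \in \mathrm{SL}_2(\mathbb{Z}/p^n\mathbb{Z}) : a \equiv d \equiv 1, \ b \equiv c \equiv 0 \pmod{p^{\min\{2m,n\}}}\}$ can be written as $a_1 b_1 a_2 b_2 a_3$, where $a_1, a_2, a_3$ are upper unitriangular matrices $\begin{pmatrix}1 & t \\ 0 & 1\end{pmatrix}$ with $t \in p^m\mathbb{Z}/p^n\mathbb{Z}$ and $b_1, b_2$ are lower unitriangular matrices $\begin{pmatrix}1 & 0 \\ s & 1\end{pmatrix}$ with $s \in p^m\mathbb{Z}/p^n\mathbb{Z}$. -/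

import Mathlib

def upperU (R : Type*) [CommRing R] (t : R) : Matrix.SpecialLinearGroup (Fin 2) R :=
  ⟨!![1, t; 0, 1], by simp [Matrix.det_fin_two_of]⟩

def lowerU (R : Type*) [CommRing R] (s : R) : Matrix.SpecialLinearGroup (Fin 2) R :=
  ⟨!![1, 0; s, 1], by simp [Matrix.det_fin_two_of]⟩

theorem stmt7 (p : ℕ) (hp : p.Prime) (m n : ℕ) (hm : 0 < m) (hmn : m < n)
    (g : Matrix.SpecialLinearGroup (Fin 2) (ZMod (p ^ n)))
    (h11 : ((p : ZMod (p ^ n)) ^ min (2 * m) n) ∣ ((g : Matrix (Fin 2) (Fin 2) (ZMod (p ^ n))) 0 0 - 1))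
    (h22 : ((p : ZMod (p ^ n)) ^ min (2 * m) n) ∣ ((g : Matrix (Fin 2) (Fin 2) (ZMod (p ^ n))) 1 1 - 1))
    (h12 : ((p : ZMod (p ^ n)) ^ min (2 * m) n) ∣ ((g : Matrix (Fin 2) (Fin 2) (ZMod (p ^ n))) 0 1))
    (h21 : ((p : ZMod (p ^ n)) ^ min (2 * m) n) ∣ ((g : Matrix (Fin 2) (Fin 2) (ZMod (p ^ n))) 1 0)) :
    ∃ t₁ t₂ t₃ s₁ s₂ : ZMod (p ^ n),
      ((p : ZMod (p ^ n)) ^ m ∣ t₁) ∧ ((p : ZMod (p ^ n)) ^ m ∣ t₂) ∧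
      ((p : ZMod (p ^ n)) ^ m ∣ t₃) ∧ ((p : ZMod (p ^ n)) ^ m ∣ s₁) ∧
      ((p : ZMod (p ^ n)) ^ m ∣ s₂) ∧
      g = upperU _ t₁ * lowerU _ s₁ * upperU _ t₂ * lowerU _ s₂ * upperU _ t₃ := by
  have hNe : NeZero (p ^ n) := ⟨pow_ne_zero n hp.pos.ne'⟩
  have hmin : ((p : ZMod (p ^ n)) ^ min (2 * m) n) = (p : ZMod (p ^ n)) ^ (2 * m) := by
    rcases le_total (2 * m) n with h | h
    · rw [min_eq_left h]
    · rw [min_eq_right h]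
      have h1 : ((p : ZMod (p ^ n)) ^ n) = 0 := by
        rw [← Nat.cast_pow, ZMod.natCast_self]
      have h2 : ((p : ZMod (p ^ n)) ^ (2 * m)) = 0 := by
        rw [← Nat.cast_pow, ZMod.natCast_eq_zero_iff]
        exact pow_dvd_pow p h
      rw [h1, h2]
  rw [hmin] at h11 h22 h12 h21
  set P : ZMod (p ^ n) := (p : ZMod (p ^ n)) ^ m with hP
  have hPP : (p : ZMod (p ^ n)) ^ (2 * m) = P * P := by rw [two_mul, pow_add]
  rw [hPP] at h11 h22 h12 h21
  set a := (g : Matrix (Fin 2) (Fin 2) (ZMod (p ^ n))) 0 0 with ha'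
  set b := (g : Matrix (Fin 2) (Fin 2) (ZMod (p ^ n))) 0 1 with hb'
  set c := (g : Matrix (Fin 2) (Fin 2) (ZMod (p ^ n))) 1 0 with hc'
  set d := (g : Matrix (Fin 2) (Fin 2) (ZMod (p ^ n))) 1 1 with hd'
  obtain ⟨α, hα⟩ := h11
  obtain ⟨δ, hδ⟩ := h22
  obtain ⟨β, hβ⟩ := h12
  obtain ⟨γ, hγ⟩ := h21
  have hdet : a * d - b * c = 1 := by
    have := g.prop
    rw [Matrix.det_fin_two] at this
    exact this
  have hPnil : IsNilpotent P := by
    refine ⟨n, ?_⟩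
    rw [hP, ← pow_mul, ← Nat.cast_pow, ZMod.natCast_eq_zero_iff]
    exact pow_dvd_pow p (Nat.le_mul_of_pos_left n hm)
  have hunit : ∀ y : ZMod (p ^ n), IsUnit (1 + P * y) := fun y =>
    (mul_comm P y ▸ ((Commute.all y P).isNilpotent_mul_left hPnil).isUnit_one_add)
  have hua : IsUnit a := by
    have h : a = 1 + P * (P * α) := by linear_combination hα
    rw [h]; exact hunit _
  have huac : IsUnit (a - P * c) := by
    have h : a - P * c = 1 + P * (P * α - P * (P * γ)) := by
      linear_combination hα - P * hγ
    rw [h]; exact hunit _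
  set t2 : ZMod (p ^ n) := P * (α - P * γ) with ht2
  set s1 : ZMod (p ^ n) := (c - P) * Ring.inverse (a - P * c) with hs1def
  have hs1 : s1 * (a - P * c) = c - P := by
    rw [hs1def, mul_assoc, Ring.inverse_mul_cancel _ huac, mul_one]
  set t3 : ZMod (p ^ n) := Ring.inverse a * (b - (1 + P * s1) * t2 - P) with ht3def
  have ht3 : a * t3 = b - (1 + P * s1) * t2 - P := by
    rw [ht3def, ← mul_assoc, Ring.mul_inverse_cancel _ hua, one_mul]
  have h2P : t2 * P = a - 1 - P * c := by
    rw [ht2]; linear_combination -hα + P * hγ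
  -- entry identities
  have hE00 : (1 + P * s1) + ((1 + P * s1) * t2 + P) * P = a := by
    linear_combination (1 + P * s1) * h2P + P * hs1
  have hE10 : s1 + (s1 * t2 + 1) * P = c := by
    linear_combination s1 * h2P + hs1
  have hE01 : ((1 + P * s1) + ((1 + P * s1) * t2 + P) * P) * t3 + ((1 + P * s1) * t2 + P) = b := by
    linear_combination t3 * hE00 + ht3
  have hE11 : (s1 + (s1 * t2 + 1) * P) * t3 + (s1 * t2 + 1) = d := by
    refine hua.mul_left_cancel ?_
    linear_combination (s1 + (s1 * t2 + 1) * P) * hE01 + b * hE10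
      - ((s1 + (s1 * t2 + 1) * P) * t3 + (s1 * t2 + 1)) * hE00 - hdet
  refine ⟨P, t2, t3, s1, P, ⟨1, (mul_one P).symm⟩, ⟨α - P * γ, ht2⟩, ?_, ?_, ⟨1, (mul_one P).symm⟩, ?_⟩
  · rw [ht3def]
    refine Dvd.dvd.mul_left ?_ _
    have hb : P ∣ b := ⟨P * β, by rw [hβ, mul_assoc]⟩
    exact dvd_sub (dvd_sub hb (Dvd.dvd.mul_left ⟨α - P * γ, ht2⟩ _)) dvd_rfl
  · rw [hs1def]
    refine Dvd.dvd.mul_right ?_ _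
    exact dvd_sub ⟨P * γ, by rw [hγ, mul_assoc]⟩ dvd_rfl
  · apply Subtype.ext
    show (g : Matrix (Fin 2) (Fin 2) (ZMod (p ^ n))) = _
    simp only [Matrix.SpecialLinearGroup.coe_mul]
    simp only [upperU, lowerU, Matrix.SpecialLinearGroup.coe_mul]
    ext i j
    fin_cases i <;> fin_cases j <;>
      simp [Matrix.mul_apply, Fin.sum_univ_two, ← ha', ← hb', ← hc', ← hd']
    · linear_combination -hE00
    · linear_combination -hE01
    · linear_combination -hE10
    · linear_combination -hE11
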